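/- As R → ∞: if π_θ = π* then Λ̃(R) → +∞ almost surely, while if π_θ ≠ π* then Λ̃(R) → 0 almost surely. -/

import Mathlib

/-!
Write `Λ̃ = C(R+K-1, K-1) · M(r) · ∏ₖ π*ₖ ^ rₖ` with `M(r) = R! / ∏ₖ rₖ!`. By the method of types,
`M(r) ∏ₖ π*ₖ ^ rₖ = [M(r) ∏ₖ (rₖ/R) ^ rₖ] · exp (-R · KL(r/R ‖ π*))`, and the bracket is at most `1`
(one term of the multinomial expansion of `(∑ₖ rₖ/R) ^ R`) and, by Stirling, at least
`c · R ^ (-(K-1)/2)` once every `rₖ` is positive.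

If `π_θ ≠ π*`, then `r/R → π_θ` a.s., so `KL(r/R ‖ π*) → KL(π_θ ‖ π*) > 0` and the polynomial
`C(R+K-1, K-1) ≤ (R+K-1) ^ (K-1)` loses against `exp (-c R)`.

If `π_θ = π*`, then `KL ≤ χ² = ∑ₖ (rₖ - R πₖ)² / (R πₖ)`, and a.s. `(rₖ - R πₖ)² = o(R log R)`:
Hoeffding's inequality for the centred indicators, Ottaviani's maximal inequality on the dyadic
blocks `n ≤ 2 ^ (m+1)` and Borel–Cantelli. Hence `R · KL = o(log R)`, while
`C(R+K-1, K-1) · R ^ (-(K-1)/2)` grows like `R ^ ((K-1)/2)`.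
-/

open MeasureTheory ProbabilityTheory Filter Finset

/-- Number of times category `k` occurs among the first `R` samples. -/
def sigCount {Ω : Type*} {K : ℕ} (X : ℕ → Ω → Fin K) (k : Fin K) (R : ℕ) (x : Ω) : ℕ :=
  ((Finset.range R).filter (fun τ => X τ x = k)).card

open Real InformationTheory Topology
open scoped NNReal Nat

section Multinomial

variable {ι : Type*} [Fintype ι]

theorem multinomial_mul_prod_pow_le_one {q : ι → ℝ} (hq : ∀ i, 0 ≤ q i) (hq1 : ∑ i, q i = 1)
    (r : ι → ℕ) : (Nat.multinomial univ r : ℝ) * ∏ i, q i ^ r i ≤ 1 := by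
  classical
  have h := sum_pow_eq_sum_piAntidiag univ q (∑ i, r i)
  rw [hq1, one_pow] at h
  rw [h]
  refine single_le_sum (f := fun k => (Nat.multinomial univ k : ℝ) * ∏ i, q i ^ k i)
    (fun k _ => mul_nonneg (Nat.cast_nonneg _) (prod_nonneg fun i _ => pow_nonneg (hq i) _)) ?_
  simp [mem_piAntidiag]

theorem factorial_le_exp_one_mul_sqrt_mul_pow {n : ℕ} (hn : n ≠ 0) :
    (n ! : ℝ) ≤ exp 1 * √n * (n / exp 1) ^ n := by
  obtain ⟨m, rfl⟩ := Nat.exists_eq_succ_of_ne_zero hn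
  have hle : Stirling.stirlingSeq (m + 1) ≤ exp 1 / √2 := by
    simpa [Stirling.stirlingSeq_one] using Stirling.stirlingSeq'_antitone (Nat.zero_le m)
  rw [Stirling.stirlingSeq, div_le_iff₀ (by positivity)] at hle
  calc ((m + 1) ! : ℝ) ≤ exp 1 / √2 * (√(2 * (m + 1 : ℕ)) * ((m + 1 : ℕ) / exp 1) ^ (m + 1)) := hle
    _ = _ := by rw [sqrt_mul (by norm_num)]; field_simp

theorem le_multinomial_mul_prod_div_pow {r : ι → ℕ} {R : ℕ} (hR : ∑ i, r i = R)
    (hr : ∀ i, r i ≠ 0) :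
    √(2 * π) * √R ≤ exp (Fintype.card ι) * √R ^ Fintype.card ι *
      ((Nat.multinomial univ r : ℝ) * ∏ i, ((r i : ℝ) / R) ^ r i) := by
  rcases Nat.eq_zero_or_pos R with rfl | hR0
  · rw [Nat.cast_zero, sqrt_zero, mul_zero]
    positivity
  have hRpos : (0 : ℝ) < R := by exact_mod_cast hR0
  have hfact : ∀ i, ((r i)! : ℝ) ≤ exp 1 * √R * (((r i : ℝ) / R) ^ r i * (R / exp 1) ^ r i) := by
    intro i
    calc ((r i)! : ℝ) ≤ exp 1 * √(r i) * ((r i) / exp 1) ^ r i :=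
          factorial_le_exp_one_mul_sqrt_mul_pow (hr i)
      _ ≤ exp 1 * √R * ((r i) / exp 1) ^ r i := by
          gcongr
          exact_mod_cast hR ▸ single_le_sum (fun j _ => Nat.zero_le (r j)) (mem_univ i)
      _ = _ := by rw [← mul_pow]; congr 2; field_simp
  have hprod : ∏ i, ((r i)! : ℝ) ≤ exp (Fintype.card ι) * √R ^ Fintype.card ι *
      (∏ i, ((r i : ℝ) / R) ^ r i) * (R / exp 1) ^ R := by
    calc ∏ i, ((r i)! : ℝ) ≤ ∏ i, (exp 1 * √R * (((r i : ℝ) / R) ^ r i * (R / exp 1) ^ r i)) :=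
          prod_le_prod (fun i _ => by positivity) (fun i _ => hfact i)
      _ = _ := by
          rw [prod_mul_distrib, prod_mul_distrib, prod_mul_distrib, prod_const, prod_const,
            prod_pow_eq_pow_sum, hR, card_univ, ← exp_nat_mul, mul_one]
          ring
  have hspec : (R ! : ℝ) = (Nat.multinomial univ r : ℝ) * ∏ i, ((r i)! : ℝ) := by
    exact_mod_cast hR ▸ (Nat.multinomial_spec univ r).symm.trans (mul_comm _ _)
  rw [← mul_le_mul_iff_of_pos_right (by positivity : (0 : ℝ) < (R / exp 1) ^ R)]
  calc √(2 * π) * √R * (R / exp 1) ^ R = √(2 * π * R) * (R / exp 1) ^ R := by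
        rw [← sqrt_mul (by positivity)]
    _ ≤ (Nat.multinomial univ r : ℝ) * ∏ i, ((r i)! : ℝ) := hspec ▸ Stirling.le_factorial_stirling R
    _ ≤ (Nat.multinomial univ r : ℝ) * (exp (Fintype.card ι) * √R ^ Fintype.card ι *
          (∏ i, ((r i : ℝ) / R) ^ r i) * (R / exp 1) ^ R) := by gcongr
    _ = _ := by ring

end Multinomial

section KL

variable {ι : Type*} [Fintype ι]

theorem klFun_le_sub_one_sq {x : ℝ} (hx : 0 ≤ x) : klFun x ≤ (x - 1) ^ 2 := by
  rcases hx.eq_or_lt with rfl | hx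
  · simp [klFun_zero]
  have := mul_le_mul_of_nonneg_left (log_le_sub_one_of_pos hx) hx.le
  rw [klFun_apply]
  nlinarith

-- `KL(q ‖ p)`, written with `klFun`; it equals `∑ i, q i * log (q i / p i)` when `∑ q = ∑ p = 1`.
noncomputable def finKL (q p : ι → ℝ) : ℝ := ∑ i, p i * klFun (q i / p i)

theorem finKL_pos {q p : ι → ℝ} (hq : ∀ i, 0 ≤ q i) (hp : ∀ i, 0 < p i) (hne : q ≠ p) :
    0 < finKL q p := by
  obtain ⟨i, hi⟩ := Function.ne_iff.mp hne
  have hdiv : 0 ≤ q i / p i := div_nonneg (hq i) (hp i).le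
  have hkl : klFun (q i / p i) ≠ 0 := by
    rw [Ne, klFun_eq_zero_iff hdiv, div_eq_one_iff_eq (hp i).ne']
    exact hi
  refine sum_pos' (fun j _ => mul_nonneg (hp j).le (klFun_nonneg (div_nonneg (hq j) (hp j).le)))
    ⟨i, mem_univ i, mul_pos (hp i) ((klFun_nonneg hdiv).lt_of_ne' hkl)⟩

theorem finKL_le_sum_sq_div {q p : ι → ℝ} (hq : ∀ i, 0 ≤ q i) (hp : ∀ i, 0 < p i) :
    finKL q p ≤ ∑ i, (q i - p i) ^ 2 / p i := by
  refine sum_le_sum fun i _ => ?_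
  calc p i * klFun (q i / p i) ≤ p i * (q i / p i - 1) ^ 2 :=
        mul_le_mul_of_nonneg_left (klFun_le_sub_one_sq (div_nonneg (hq i) (hp i).le)) (hp i).le
    _ = (q i - p i) ^ 2 / p i := by field_simp [(hp i).ne']

theorem prod_pow_eq_prod_div_pow_mul_exp_finKL {p : ι → ℝ} (hp : ∀ i, 0 < p i)
    (hp1 : ∑ i, p i = 1) {r : ι → ℕ} {R : ℕ} (hR : ∑ i, r i = R) (hR0 : R ≠ 0) :
    ∏ i, p i ^ r i =
      (∏ i, ((r i : ℝ) / R) ^ r i) * exp (-(R * finKL (fun i => (r i : ℝ) / R) p)) := by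
  have hRpos : (0 : ℝ) < R := by exact_mod_cast Nat.pos_of_ne_zero hR0
  have hterm : ∀ i, (R : ℝ) * (p i * klFun (r i / R / p i)) =
      r i * log (r i / R / p i) + (R * p i - r i) := by
    intro i
    rw [klFun_apply]
    field_simp [(hp i).ne']
    ring
  have hcancel : ∑ i, ((R : ℝ) * p i - r i) = 0 := by
    rw [sum_sub_distrib, ← mul_sum, hp1, mul_one, ← Nat.cast_sum, hR, sub_self]
  have hexp : (R : ℝ) * finKL (fun i => (r i : ℝ) / R) p = ∑ i, r i * log (r i / R / p i) := by
    rw [finKL, mul_sum, sum_congr rfl fun i _ => hterm i, sum_add_distrib, hcancel, add_zero]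
  rw [hexp, ← sum_neg_distrib, exp_sum, ← prod_mul_distrib]
  refine prod_congr rfl fun i _ => ?_
  rcases Nat.eq_zero_or_pos (r i) with h0 | hpos
  · simp [h0]
  have hri : (0 : ℝ) < r i := by exact_mod_cast hpos
  have hpi := hp i
  rw [← log_pow, exp_neg, exp_log (by positivity), div_pow (r i / R : ℝ), inv_div,
    mul_div_cancel₀ _ (by positivity)]

end KL

section ULR

variable {ι : Type*} [Fintype ι]

-- `Λ̃` for the count vector `r`, with `K = Fintype.card ι` and `R = ∑ i, r i`.
noncomputable def asymptoticULR (p : ι → ℝ) (r : ι → ℕ) : ℝ :=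
  ((∑ i, r i + Fintype.card ι - 1)! : ℝ) / (((Fintype.card ι - 1)! : ℝ) * ∏ i, ((r i)! : ℝ)) *
    ∏ i, p i ^ r i

theorem add_factorial_eq_choose_mul_multinomial (r : ι → ℕ) (J : ℕ) :
    (∑ i, r i + J)! = (∑ i, r i + J).choose J * Nat.multinomial univ r * (J ! * ∏ i, (r i)!) := by
  rw [← Nat.add_choose_mul_factorial_mul_factorial, ← Nat.multinomial_spec univ r]
  ring

theorem asymptoticULR_eq {p : ι → ℝ} (hp : ∀ i, 0 < p i) (hp1 : ∑ i, p i = 1) {r : ι → ℕ}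
    {R : ℕ} (hR : ∑ i, r i = R) (hR0 : R ≠ 0) :
    asymptoticULR p r = (R + (Fintype.card ι - 1)).choose (Fintype.card ι - 1) *
      ((Nat.multinomial univ r : ℝ) * ∏ i, ((r i : ℝ) / R) ^ r i) *
      exp (-(R * finKL (fun i => (r i : ℝ) / R) p)) := by
  have hcard : 1 ≤ Fintype.card ι := by
    obtain ⟨i, -, -⟩ := exists_ne_zero_of_sum_ne_zero (hR ▸ hR0)
    exact Fintype.card_pos_iff.mpr ⟨i⟩
  rw [asymptoticULR, Nat.add_sub_assoc hcard, add_factorial_eq_choose_mul_multinomial,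
    prod_pow_eq_prod_div_pow_mul_exp_finKL hp hp1 hR hR0, hR]
  have : (0 : ℝ) < ((Fintype.card ι - 1)! : ℝ) * ∏ i, ((r i)! : ℝ) := by positivity
  push_cast
  field_simp

theorem asymptoticULR_le {p : ι → ℝ} (hp : ∀ i, 0 < p i) (hp1 : ∑ i, p i = 1) {r : ι → ℕ} {R : ℕ}
    (hR : ∑ i, r i = R) (hR0 : R ≠ 0) :
    asymptoticULR p r ≤ ((R : ℝ) + (Fintype.card ι - 1 : ℕ)) ^ (Fintype.card ι - 1) /
      (Fintype.card ι - 1)! * exp (-(R * finKL (fun i => (r i : ℝ) / R) p)) := by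
  have hRpos : (0 : ℝ) < R := by exact_mod_cast Nat.pos_of_ne_zero hR0
  have hmult := multinomial_mul_prod_pow_le_one (q := fun i => (r i : ℝ) / R)
    (fun i => by positivity) (by rw [← sum_div, ← Nat.cast_sum, hR, div_self hRpos.ne']) r
  have hchoose := Nat.choose_le_pow_div (α := ℝ) (Fintype.card ι - 1) (R + (Fintype.card ι - 1))
  rw [Nat.cast_add] at hchoose
  rw [asymptoticULR_eq hp hp1 hR hR0]
  refine mul_le_mul_of_nonneg_right ?_ (exp_pos _).le
  calc _ ≤ ((R + (Fintype.card ι - 1)).choose (Fintype.card ι - 1) : ℝ) * 1 := by gcongr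
    _ ≤ _ := by rw [mul_one]; exact hchoose

theorem le_asymptoticULR {p : ι → ℝ} (hp : ∀ i, 0 < p i) (hp1 : ∑ i, p i = 1) {J : ℕ}
    (hcard : Fintype.card ι = J + 1) {r : ι → ℕ} {R : ℕ} (hR : ∑ i, r i = R)
    (hr : ∀ i, r i ≠ 0) :
    √(2 * π) / (exp (J + 1) * J !) * √R ^ J * exp (-(R * finKL (fun i => (r i : ℝ) / R) p)) ≤
      asymptoticULR p r := by
  have hR0 : R ≠ 0 := by
    have ⟨i⟩ : Nonempty ι := Fintype.card_pos_iff.mp (by omega)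
    exact hR ▸ (sum_pos' (fun j _ => Nat.zero_le (r j))
      ⟨i, mem_univ i, Nat.pos_of_ne_zero (hr i)⟩).ne'
  have hRpos : (0 : ℝ) < R := by exact_mod_cast Nat.pos_of_ne_zero hR0
  have hsqrt : (0 : ℝ) < √R := sqrt_pos.mpr hRpos
  have hchoose : (R : ℝ) ^ J / J ! ≤ (R + J).choose J := by
    calc (R : ℝ) ^ J / J ! ≤ ((R + J + 1 - J : ℕ) : ℝ) ^ J / J ! := by
          gcongr
          exact_mod_cast Nat.le_sub_of_add_le (by omega)
      _ ≤ _ := Nat.pow_le_choose J (R + J)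
  have hmult : √(2 * π) / (exp (J + 1) * √R ^ J) ≤
      (Nat.multinomial univ r : ℝ) * ∏ i, ((r i : ℝ) / R) ^ r i := by
    have := le_multinomial_mul_prod_div_pow hR hr
    rw [hcard, pow_succ, Nat.cast_succ] at this
    rw [div_le_iff₀ (by positivity), ← mul_le_mul_iff_of_pos_right hsqrt]
    linarith
  rw [asymptoticULR_eq hp hp1 hR hR0, hcard, Nat.add_sub_cancel]
  refine mul_le_mul_of_nonneg_right ?_ (exp_pos _).le
  calc √(2 * π) / (exp (J + 1) * J !) * √R ^ J
      = (R : ℝ) ^ J / J ! * (√(2 * π) / (exp (J + 1) * √R ^ J)) := by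
        rw [show (R : ℝ) ^ J = √R ^ J * √R ^ J by rw [← mul_pow, mul_self_sqrt hRpos.le]]
        field_simp
    _ ≤ _ := by gcongr

end ULR

section Asymptotics

variable {ι : Type*} [Fintype ι] {p : ι → ℝ}

theorem tendsto_div_of_eventually_sq_sub_le {a : ℕ → ℝ} {c : ℝ}
    (h : ∀ᶠ R : ℕ in atTop, (a R - R * c) ^ 2 ≤ R * log R) :
    Tendsto (fun R : ℕ => a R / R) atTop (𝓝 c) := by
  have hlog : Tendsto (fun R : ℕ => √(log R / R)) atTop (𝓝 0) := by
    have := isLittleO_log_id_atTop.tendsto_div_nhds_zero.comp tendsto_natCast_atTop_atTop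
    simpa only [sqrt_zero, Function.comp_def, id] using (continuous_sqrt.tendsto 0).comp this
  rw [tendsto_iff_norm_sub_tendsto_zero]
  refine squeeze_zero' (Eventually.of_forall fun _ => norm_nonneg _) ?_ hlog
  filter_upwards [h, eventually_gt_atTop 0] with R hR hR0
  have hRpos : (0 : ℝ) < R := by exact_mod_cast hR0
  rw [Real.norm_eq_abs]
  apply abs_le_sqrt
  rw [show a R / R - c = (a R - R * c) / R by field_simp, div_pow,
    div_le_div_iff₀ (by positivity) hRpos]
  nlinarith

theorem tendsto_asymptoticULR_nhds_zero (hp : ∀ i, 0 < p i) (hp1 : ∑ i, p i = 1) {q : ι → ℝ}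
    (hq : ∀ i, 0 ≤ q i) (hne : q ≠ p) {r : ℕ → ι → ℕ} (hsum : ∀ R, ∑ i, r R i = R)
    (hconv : ∀ i, Tendsto (fun R : ℕ => (r R i : ℝ) / R) atTop (𝓝 (q i))) :
    Tendsto (fun R => asymptoticULR p (r R)) atTop (𝓝 0) := by
  set J := Fintype.card ι - 1
  set d := finKL q p
  have hd : 0 < d := finKL_pos hq hp hne
  have hKL : Tendsto (fun R : ℕ => finKL (fun i => (r R i : ℝ) / R) p) atTop (𝓝 d) :=
    tendsto_finsetSum _ fun i _ =>
      ((continuous_klFun.tendsto _).comp ((hconv i).div_const _)).const_mul _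
  have hpoly : Tendsto (fun R : ℕ => ((R : ℝ) + J) ^ J * exp (-(d / 2) * ((R : ℝ) + J)))
      atTop (𝓝 0) := by
    have := (tendsto_rpow_mul_exp_neg_mul_atTop_nhds_zero J (d / 2) (by positivity)).comp
      (tendsto_atTop_add_const_right _ (J : ℝ) tendsto_natCast_atTop_atTop)
    simpa only [Function.comp_def, rpow_natCast] using this
  have hbound : ∀ᶠ R : ℕ in atTop, asymptoticULR p (r R) ≤
      exp (d / 2 * J) / J ! * (((R : ℝ) + J) ^ J * exp (-(d / 2) * ((R : ℝ) + J))) := by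
    filter_upwards [hKL.eventually (eventually_ge_nhds (half_lt_self hd)), eventually_ne_atTop 0]
      with R hdR hR0
    have hle := asymptoticULR_le hp hp1 (hsum R) hR0
    calc _ ≤ ((R : ℝ) + J) ^ J / J ! * exp (-(R * (d / 2))) := by
          refine hle.trans ?_
          gcongr
      _ = _ := by
          rw [show -(d / 2) * ((R : ℝ) + J) = -(R * (d / 2)) - d / 2 * J by ring, exp_sub]
          field_simp
  refine squeeze_zero' (Eventually.of_forall fun R => ?_) hbound ?_
  · exact mul_nonneg (by positivity) (prod_nonneg fun i _ => pow_nonneg (hp i).le _)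
  · simpa using hpoly.const_mul (exp (d / 2 * J) / J !)

theorem eventually_mul_finKL_le (hp : ∀ i, 0 < p i) {r : ℕ → ι → ℕ}
    (hfluct : ∀ ε > 0, ∀ i, ∀ᶠ R : ℕ in atTop, ((r R i : ℝ) - R * p i) ^ 2 ≤ ε * (R * log R))
    {δ : ℝ} (hδ : 0 < δ) :
    ∀ᶠ R : ℕ in atTop, (R : ℝ) * finKL (fun i => (r R i : ℝ) / R) p ≤ δ * log R := by
  rcases isEmpty_or_nonempty ι with hι | hι
  · exact .of_forall fun R => by simpa [finKL] using mul_nonneg hδ.le (log_natCast_nonneg R)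
  have hcard : (0 : ℝ) < Fintype.card ι := by exact_mod_cast Fintype.card_pos
  have hε : ∀ i, 0 < p i * δ / Fintype.card ι := fun i => by have := hp i; positivity
  filter_upwards [eventually_all.mpr fun i => hfluct _ (hε i) i, eventually_gt_atTop 0]
    with R hR hR0
  have hRpos : (0 : ℝ) < R := by exact_mod_cast hR0
  calc (R : ℝ) * finKL (fun i => (r R i : ℝ) / R) p
      ≤ R * ∑ i, ((r R i : ℝ) / R - p i) ^ 2 / p i :=
        mul_le_mul_of_nonneg_left (finKL_le_sum_sq_div (fun i => by positivity) hp) hRpos.le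
    _ = ∑ i, ((r R i : ℝ) - R * p i) ^ 2 / (R * p i) := by
        rw [mul_sum]
        refine sum_congr rfl fun i _ => ?_
        field_simp [(hp i).ne']
    _ ≤ ∑ _i : ι, δ / Fintype.card ι * log R := by
        refine sum_le_sum fun i _ => ?_
        rw [div_le_iff₀ (mul_pos hRpos (hp i))]
        calc _ ≤ _ := hR i
          _ = _ := by field_simp
    _ = δ * log R := by
        rw [sum_const, card_univ, nsmul_eq_mul]
        field_simp

theorem tendsto_asymptoticULR_atTop (hcard : 2 ≤ Fintype.card ι) (hp : ∀ i, 0 < p i)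
    (hp1 : ∑ i, p i = 1) {r : ℕ → ι → ℕ} (hsum : ∀ R, ∑ i, r R i = R)
    (hfluct : ∀ ε > 0, ∀ i, ∀ᶠ R : ℕ in atTop, ((r R i : ℝ) - R * p i) ^ 2 ≤ ε * (R * log R)) :
    Tendsto (fun R => asymptoticULR p (r R)) atTop atTop := by
  obtain ⟨J, hJ⟩ : ∃ J, Fintype.card ι = J + 1 := ⟨_, (Nat.sub_add_cancel (by omega)).symm⟩
  have hJpos : (0 : ℝ) < J := by exact_mod_cast (by omega : 0 < J)
  have hr : ∀ᶠ R : ℕ in atTop, ∀ i, r R i ≠ 0 := by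
    refine eventually_all.mpr fun i => ?_
    have hconv := tendsto_div_of_eventually_sq_sub_le
      ((hfluct 1 one_pos i).mono fun R h => by rwa [one_mul] at h)
    filter_upwards [hconv.eventually (eventually_gt_nhds (hp i))] with R hR h0
    simp [h0] at hR
  set c := √(2 * π) / (exp (J + 1) * J !)
  have hbound : ∀ᶠ R : ℕ in atTop, c * exp (J / 4 * log R) ≤ asymptoticULR p (r R) := by
    filter_upwards [hr, eventually_mul_finKL_le hp hfluct (by positivity : (0 : ℝ) < J / 4),
      eventually_gt_atTop 0] with R hrR hKL hR0
    have hRpos : (0 : ℝ) < R := by exact_mod_cast hR0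
    refine le_trans ?_ (le_asymptoticULR hp hp1 hJ (hsum R) hrR)
    rw [mul_assoc]
    gcongr
    rw [← exp_log (pow_pos (sqrt_pos.mpr hRpos) J), log_pow, log_sqrt hRpos.le, ← exp_add]
    gcongr
    linarith
  refine tendsto_atTop_mono' _ hbound (Tendsto.const_mul_atTop (by positivity) ?_)
  exact tendsto_exp_atTop.comp ((tendsto_log_atTop.comp tendsto_natCast_atTop_atTop).const_mul_atTop
    (by positivity))

theorem eventually_sq_le_mul_log_of_dyadic {f : ℕ → ℝ} {C : ℝ} (hC : 0 ≤ C)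
    (h : ∀ᶠ m : ℕ in atTop, ∀ n ≤ 2 ^ (m + 1), f n ^ 2 ≤ C * (2 ^ m * (m + 1))) :
    ∀ᶠ R : ℕ in atTop, f R ^ 2 ≤ 2 * C / log 2 * (R * log R) := by
  obtain ⟨m₀, hm₀⟩ := eventually_atTop.mp h
  filter_upwards [eventually_ge_atTop (2 ^ max m₀ 1)] with R hR
  have hR0 : R ≠ 0 := (Nat.pos_of_ne_zero (by positivity)).trans_le hR |>.ne'
  set m := Nat.log 2 R
  have hm : max m₀ 1 ≤ m := Nat.le_log_of_pow_le one_lt_two hR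
  have hlow : ((2 : ℕ) ^ m : ℝ) ≤ R := by exact_mod_cast Nat.pow_log_le_self 2 hR0
  have hlog : m * log 2 ≤ log R := by
    rw [← log_pow]
    exact log_le_log (by positivity) (by exact_mod_cast hlow)
  have hm1 : (1 : ℝ) ≤ m := by exact_mod_cast (le_max_right _ _).trans hm
  have hlog2 := log_pos one_lt_two
  calc f R ^ 2 ≤ C * (2 ^ m * (m + 1)) :=
        hm₀ m ((le_max_left _ _).trans hm) R (Nat.lt_pow_succ_log_self one_lt_two R).le
    _ ≤ C * (R * (2 * (log R / log 2))) := by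
        push_cast at hlow
        gcongr
        rw [mul_div_assoc', le_div_iff₀ hlog2]
        nlinarith
    _ = 2 * C / log 2 * (R * log R) := by ring

end Asymptotics

theorem measurable_sum_iSup_comap {Ω : Type*} {Z : ℕ → Ω → ℝ} {T : Set ℕ} {s : Finset ℕ}
    (hs : ↑s ⊆ T) :
    Measurable[⨆ i ∈ T, MeasurableSpace.comap (Z i) inferInstance] fun ω => ∑ i ∈ s, Z i ω :=
  Finset.measurable_sum s fun i hi => (comap_measurable (Z i)).mono
    (le_iSup₂ (f := fun i _ => MeasurableSpace.comap (Z i) _) i (hs hi)) le_rfl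

theorem measureReal_inter_eq_mul_of_measurableSet_Iio_Ici {Ω : Type*} [MeasurableSpace Ω]
    {P : Measure Ω} {Z : ℕ → Ω → ℝ} (hind : iIndepFun Z P)
    (hmeas : ∀ i, Measurable (Z i)) {n : ℕ} {A B : Set Ω}
    (hA : MeasurableSet[⨆ i ∈ Set.Iio n, MeasurableSpace.comap (Z i) inferInstance] A)
    (hB : MeasurableSet[⨆ i ∈ Set.Ici n, MeasurableSpace.comap (Z i) inferInstance] B) :
    P.real (A ∩ B) = P.real A * P.real B := by
  have hindep := indep_iSup_of_disjoint (fun i => (hmeas i).comap_le)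
    ((iIndepFun_iff_iIndep _ _ _).mp hind) (Set.Iio_disjoint_Ici (le_refl n))
  simp only [measureReal_def, (Indep_iff _ _ _).mp hindep _ _ hA hB, ENNReal.toReal_mul]

section Fluctuations

variable {Ω : Type*} [MeasurableSpace Ω] {P : Measure Ω} [IsProbabilityMeasure P]
  {Z : ℕ → Ω → ℝ}

theorem measureReal_le_abs_sum_le_two_mul_exp {c : ℝ≥0} (hind : iIndepFun Z P)
    (hZ : ∀ i, HasSubgaussianMGF (Z i) c P) (s : Finset ℕ) {a : ℝ} (ha : 0 ≤ a) :
    P.real {ω | a ≤ |∑ i ∈ s, Z i ω|} ≤ 2 * exp (-a ^ 2 / (2 * (#s * (c : ℝ)))) := by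
  have hup := HasSubgaussianMGF.measure_sum_ge_le_of_iIndepFun hind (fun i _ => hZ i) ha (s := s)
  have hdown := HasSubgaussianMGF.measure_sum_ge_le_of_iIndepFun
    (hind.comp (fun _ x => -x) fun _ => measurable_neg) (fun i _ => (hZ i).neg) ha (s := s)
  simp only [sum_const, nsmul_eq_mul, NNReal.coe_mul, NNReal.coe_natCast,
    Function.comp_def, sum_neg_distrib] at hup hdown
  calc P.real {ω | a ≤ |∑ i ∈ s, Z i ω|}
      ≤ P.real ({ω | a ≤ ∑ i ∈ s, Z i ω} ∪ {ω | a ≤ -∑ i ∈ s, Z i ω}) :=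
        measureReal_mono fun ω (hω : a ≤ _) => le_abs.mp hω
    _ ≤ _ := (measureReal_union_le _ _).trans (by linarith)

-- With `S m = ∑ i ∈ range m, Z i`, the `n`-th set of `disjointed` is the event that `|S m|` first
-- reaches `2 a` at `m = n`; it is determined by `Z 0, …, Z (n - 1)`, hence independent of the
-- increment `S N - S n`.
theorem measureReal_disjointed_le_two_mul_inter (hind : iIndepFun Z P)
    (hmeas : ∀ i, Measurable (Z i)) {N : ℕ} {a : ℝ}
    (htail : ∀ n ≤ N, P.real {ω | a ≤ |∑ i ∈ Ico n N, Z i ω|} ≤ 1 / 2) {n : ℕ} (hn : n ≤ N) :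
    P.real (disjointed (fun m => {ω | 2 * a ≤ |∑ i ∈ range m, Z i ω|}) n) ≤
      2 * P.real (disjointed (fun m => {ω | 2 * a ≤ |∑ i ∈ range m, Z i ω|}) n ∩
        {ω | a ≤ |∑ i ∈ range N, Z i ω|}) := by
  set 𝓕 : Set ℕ → MeasurableSpace Ω := fun T => ⨆ i ∈ T, MeasurableSpace.comap (Z i) inferInstance
  have h𝓕 : ∀ T, 𝓕 T ≤ ‹MeasurableSpace Ω› := fun T => iSup₂_le fun i _ => (hmeas i).comap_le
  set F : ℕ → Set Ω := fun m => {ω | 2 * a ≤ |∑ i ∈ range m, Z i ω|}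
  set B : Set Ω := {ω | |∑ i ∈ Ico n N, Z i ω| < a}
  have hF : ∀ {m}, m ≤ n → MeasurableSet[𝓕 (Set.Iio n)] (F m) := fun hm =>
    (continuous_abs.measurable.comp (measurable_sum_iSup_comap fun i hi =>
      Set.mem_Iio.mpr ((mem_range.mp hi).trans_le hm))) measurableSet_Ici
  have hD : MeasurableSet[𝓕 (Set.Iio n)] (disjointed F n) := by
    rw [disjointed_eq_inter_compl]
    exact (hF le_rfl).inter <| .biInter (Set.to_countable _) fun j hj => (hF (le_of_lt hj)).compl
  have hB : MeasurableSet[𝓕 (Set.Ici n)] B :=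
    (continuous_abs.measurable.comp
      (measurable_sum_iSup_comap fun i hi => (mem_Ico.mp hi).1)) measurableSet_Iio
  have hBhalf : 1 / 2 ≤ P.real B := by
    have hBc : Bᶜ = {ω | a ≤ |∑ i ∈ Ico n N, Z i ω|} := by ext; simp [B]
    linarith [htail n hn, hBc ▸ probReal_compl_eq_one_sub (μ := P) (h𝓕 _ _ hB)]
  have hsub : disjointed F n ∩ B ⊆ disjointed F n ∩ {ω | a ≤ |∑ i ∈ range N, Z i ω|} := by
    rintro ω ⟨hωD, hωB : |_| < a⟩
    have hωF : 2 * a ≤ |_| := disjointed_le F n hωD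
    have htri := abs_add_le (∑ i ∈ range N, Z i ω) (-∑ i ∈ Ico n N, Z i ω)
    rw [← sum_range_add_sum_Ico _ hn, add_neg_cancel_right, abs_neg, sum_range_add_sum_Ico _ hn]
      at htri
    exact ⟨hωD, show a ≤ |_| by linarith⟩
  calc P.real (disjointed F n) ≤ 2 * (P.real (disjointed F n) * P.real B) := by
        nlinarith [measureReal_nonneg (s := disjointed F n) (μ := P)]
    _ = 2 * P.real (disjointed F n ∩ B) := by
        rw [measureReal_inter_eq_mul_of_measurableSet_Iio_Ici hind hmeas hD hB]
    _ ≤ _ := mul_le_mul_of_nonneg_left (measureReal_mono hsub) zero_le_two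

theorem measureReal_exists_le_abs_sum_le_two_mul (hind : iIndepFun Z P)
    (hmeas : ∀ i, Measurable (Z i)) {N : ℕ} {a : ℝ}
    (htail : ∀ n ≤ N, P.real {ω | a ≤ |∑ i ∈ Ico n N, Z i ω|} ≤ 1 / 2) :
    P.real {ω | ∃ n ≤ N, 2 * a ≤ |∑ i ∈ range n, Z i ω|} ≤
      2 * P.real {ω | a ≤ |∑ i ∈ range N, Z i ω|} := by
  set F : ℕ → Set Ω := fun m => {ω | 2 * a ≤ |∑ i ∈ range m, Z i ω|}
  set G : Set Ω := {ω | a ≤ |∑ i ∈ range N, Z i ω|}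
  have hD : ∀ n, MeasurableSet (disjointed F n) := MeasurableSet.disjointed fun m =>
    measurableSet_le measurable_const (Finset.measurable_sum _ fun i _ => hmeas i).abs
  have hG : MeasurableSet G :=
    measurableSet_le measurable_const (Finset.measurable_sum _ fun i _ => hmeas i).abs
  calc P.real {ω | ∃ n ≤ N, 2 * a ≤ |∑ i ∈ range n, Z i ω|}
      = P.real (⋃ n ∈ range (N + 1), disjointed F n) := by
        rw [biUnion_range_succ_disjointed, partialSups_eq_biUnion_range]
        congr 1
        ext
        simp [F]
    _ = ∑ n ∈ range (N + 1), P.real (disjointed F n) :=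
        measureReal_biUnion_finset (fun m _ n _ h => disjoint_disjointed F h) fun n _ => hD n
    _ ≤ ∑ n ∈ range (N + 1), 2 * P.real (disjointed F n ∩ G) :=
        sum_le_sum fun n hn => measureReal_disjointed_le_two_mul_inter hind hmeas htail
          (Nat.lt_succ_iff.mp (mem_range.mp hn))
    _ = 2 * P.real (⋃ n ∈ range (N + 1), disjointed F n ∩ G) := by
        rw [← mul_sum, measureReal_biUnion_finset
          (fun m _ n _ h =>
            (disjoint_disjointed F h).mono Set.inter_subset_left Set.inter_subset_left)
          fun n _ => (hD n).inter hG]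
    _ ≤ 2 * P.real G := mul_le_mul_of_nonneg_left
        (measureReal_mono (Set.iUnion₂_subset fun n _ => Set.inter_subset_right)) zero_le_two

theorem measureReal_exists_le_abs_sum_le_four_mul_exp (hind : iIndepFun Z P)
    (hmeas : ∀ i, Measurable (Z i)) {c : ℝ≥0} (hc : 0 < c) (hZ : ∀ i, HasSubgaussianMGF (Z i) c P)
    (N : ℕ) {a : ℝ} (ha : 0 < a) :
    P.real {ω | ∃ n ≤ N, 2 * a ≤ |∑ i ∈ range n, Z i ω|} ≤
      4 * exp (-a ^ 2 / (2 * (N * (c : ℝ)))) := by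
  set q := exp (-a ^ 2 / (2 * (N * (c : ℝ))))
  rcases le_or_gt 1 (4 * q) with hq | hq
  · exact measureReal_le_one.trans hq
  have hblock : ∀ s : Finset ℕ, #s ≤ N → P.real {ω | a ≤ |∑ i ∈ s, Z i ω|} ≤ 2 * q := by
    intro s hs
    rcases s.eq_empty_or_nonempty with rfl | hne
    · simp [not_le.mpr ha, q, exp_nonneg]
    refine (measureReal_le_abs_sum_le_two_mul_exp hind hZ s ha.le).trans ?_
    show _ ≤ 2 * exp (-a ^ 2 / (2 * (N * (c : ℝ))))
    gcongr 2 * exp ?_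
    rw [neg_div, neg_div, neg_le_neg_iff]
    have : (0 : ℝ) < #s := by exact_mod_cast hne.card_pos
    gcongr
  calc _ ≤ 2 * P.real {ω | a ≤ |∑ i ∈ range N, Z i ω|} :=
        measureReal_exists_le_abs_sum_le_two_mul hind hmeas fun n _ =>
          (hblock _ (by simp)).trans (by linarith)
    _ ≤ 4 * q := by linarith [hblock (range N) (by simp)]

theorem ae_eventually_forall_sq_sum_lt (hind : iIndepFun Z P)
    (hmeas : ∀ i, Measurable (Z i)) {c : ℝ≥0} (hc : 0 < c) (hZ : ∀ i, HasSubgaussianMGF (Z i) c P)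
    {β : ℝ} (hβ : 0 < β) :
    ∀ᵐ ω ∂P, ∀ᶠ m : ℕ in atTop, ∀ n ≤ 2 ^ (m + 1),
      (∑ i ∈ range n, Z i ω) ^ 2 < 16 * c * β * (2 ^ m * (m + 1)) := by
  -- chosen so that the maximal bound on the block `n ≤ 2 ^ (m + 1)` is `4 exp (-β (m + 1))`
  set a : ℕ → ℝ := fun m => √(4 * c * β * (2 ^ m * (m + 1)))
  have ha : ∀ m, 0 < a m := fun m => sqrt_pos.mpr (by positivity)
  have ha2 : ∀ m, a m ^ 2 = 4 * c * β * (2 ^ m * (m + 1)) := fun m => sq_sqrt (by positivity)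
  set E : ℕ → Set Ω := fun m => {ω | ∃ n ≤ 2 ^ (m + 1), 2 * a m ≤ |∑ i ∈ range n, Z i ω|}
  have hE : ∀ m, P (E m) ≤ ENNReal.ofReal (4 * exp (-β) * exp (m * -β)) := fun m => by
    rw [← ofReal_measureReal]
    refine ENNReal.ofReal_le_ofReal
      ((measureReal_exists_le_abs_sum_le_four_mul_exp hind hmeas hc hZ _ (ha m)).trans_eq ?_)
    rw [ha2, mul_assoc (4 : ℝ) (exp (-β)), ← exp_add]
    congr 2
    push_cast
    field_simp
    ring
  have hsum : Summable fun m : ℕ => 4 * exp (-β) * exp (m * -β) :=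
    (summable_exp_nat_mul_iff.mpr (neg_lt_zero.mpr hβ)).mul_left _
  have hBC := ae_eventually_notMem (μ := P) (s := E) <| ne_top_of_le_ne_top
    (ENNReal.ofReal_tsum_of_nonneg (fun m => by positivity) hsum ▸ ENNReal.ofReal_ne_top)
    (ENNReal.tsum_le_tsum hE)
  filter_upwards [hBC] with ω hω
  filter_upwards [hω] with m hm n hn
  have hlt : |∑ i ∈ range n, Z i ω| < 2 * a m := not_le.mp fun h => hm ⟨n, hn, h⟩
  calc (∑ i ∈ range n, Z i ω) ^ 2 = |∑ i ∈ range n, Z i ω| ^ 2 := (sq_abs _).symm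
    _ < (2 * a m) ^ 2 := by gcongr
    _ = _ := by rw [mul_pow, ha2]; ring

theorem ae_forall_eventually_sq_sum_le_mul_log (hind : iIndepFun Z P)
    (hmeas : ∀ i, Measurable (Z i)) {c : ℝ≥0} (hc : 0 < c) (hZ : ∀ i, HasSubgaussianMGF (Z i) c P) :
    ∀ᵐ ω ∂P, ∀ ε > 0, ∀ᶠ R : ℕ in atTop, (∑ i ∈ range R, Z i ω) ^ 2 ≤ ε * (R * log R) := by
  have hlog2 := log_pos one_lt_two
  have hc' : (0 : ℝ) < c := hc
  have hfix : ∀ n : ℕ, ∀ᵐ ω ∂P, ∀ᶠ R : ℕ in atTop,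
      (∑ i ∈ range R, Z i ω) ^ 2 ≤ 1 / (n + 1) * (R * log R) := fun n => by
    filter_upwards [ae_eventually_forall_sq_sum_lt hind hmeas hc hZ
      (β := log 2 / (32 * c * (n + 1))) (by positivity)] with ω hω
    convert eventually_sq_le_mul_log_of_dyadic (by positivity)
      (hω.mono fun m hm n hn => (hm n hn).le) using 3
    field_simp
    ring
  filter_upwards [ae_all_iff.mpr hfix] with ω hω ε hε
  obtain ⟨n, hn⟩ := exists_nat_one_div_lt hε
  filter_upwards [hω n] with R hR
  exact hR.trans (by gcongr)

theorem ae_forall_eventually_sq_card_filter_sub_le {α : Type*} [MeasurableSpace α]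
    [MeasurableSingletonClass α] [DecidableEq α] {X : ℕ → Ω → α} (hmeas : ∀ n, Measurable (X n))
    (hind : iIndepFun X P) {k : α} {p : ℝ} (hp : 0 ≤ p)
    (hlaw : ∀ n, P {ω | X n ω = k} = ENNReal.ofReal p) :
    ∀ᵐ ω ∂P, ∀ ε > 0, ∀ᶠ R : ℕ in atTop,
      ((#{n ∈ range R | X n ω = k} : ℝ) - R * p) ^ 2 ≤ ε * (R * log R) := by
  set g : α → ℝ := fun y => if y = k then 1 else 0
  have hg : Measurable g := measurable_const.ite (measurableSet_singleton k) measurable_const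
  have hmean : ∀ n, P[fun ω => g (X n ω)] = p := fun n => by
    rw [show (fun ω => g (X n ω)) = (X n ⁻¹' {k}).indicator 1 by
        ext ω; simp only [g, Set.indicator, Set.mem_preimage, Set.mem_singleton_iff, Pi.one_apply],
      integral_indicator_one ((hmeas n) (measurableSet_singleton k))]
    simp [measureReal_def, Set.preimage, hlaw n, hp]
  have hZ : ∀ n, HasSubgaussianMGF (fun ω => g (X n ω) - p) ((‖(1 : ℝ) - 0‖₊ / 2) ^ 2) P :=
    fun n => hmean n ▸ hasSubgaussianMGF_of_mem_Icc (hg.comp (hmeas n)).aemeasurable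
      (ae_of_all _ fun ω => by
        simp only [g]
        split_ifs <;> simp)
  filter_upwards [ae_forall_eventually_sq_sum_le_mul_log (hind.comp (fun _ y => g y - p)
    fun _ => hg.sub_const p) (fun n => (hg.comp (hmeas n)).sub_const p) (by norm_num) hZ]
    with ω hω ε hε
  refine (hω ε hε).mono fun R hR => le_of_eq_of_le ?_ hR
  simp only [g, Function.comp_apply, sum_sub_distrib, sum_boole, sum_const, card_range,
    nsmul_eq_mul]

end Fluctuations

theorem sum_sigCount {Ω : Type*} {K : ℕ} (X : ℕ → Ω → Fin K) (R : ℕ) (x : Ω) :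
    ∑ k, sigCount X k R x = R := by
  unfold sigCount
  rw [← card_eq_sum_card_fiberwise fun τ _ => mem_univ (X τ x), card_range]

theorem asymptoticULR_dichotomy_general
    {Ω : Type*} [MeasurableSpace Ω] (P : Measure Ω) [IsProbabilityMeasure P]
    (K : ℕ) (hK : 2 ≤ K)
    (πstar πθ : Fin K → ℝ)
    (hstar_pos : ∀ k, 0 < πstar k) (hstar_sum : ∑ k, πstar k = 1)
    (hθ_pos : ∀ k, 0 < πθ k)
    (X : ℕ → Ω → Fin K) (hX_meas : ∀ n, Measurable (X n))
    (hX_indep : iIndepFun X P)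
    (hX_law : ∀ n k, P {x | X n x = k} = ENNReal.ofReal (πθ k)) :
    (πθ = πstar →
      ∀ᵐ x ∂P, Tendsto
        (fun R =>
          (((R + K - 1).factorial : ℕ) : ℝ) /
              ((((K - 1).factorial : ℕ) : ℝ) *
                ∏ k, (((sigCount X k R x).factorial : ℕ) : ℝ)) *
            ∏ k, πstar k ^ sigCount X k R x)
        atTop atTop) ∧
    (πθ ≠ πstar →
      ∀ᵐ x ∂P, Tendsto
        (fun R =>
          (((R + K - 1).factorial : ℕ) : ℝ) /
              ((((K - 1).factorial : ℕ) : ℝ) *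
                ∏ k, (((sigCount X k R x).factorial : ℕ) : ℝ)) *
            ∏ k, πstar k ^ sigCount X k R x)
        atTop (nhds 0)) := by
  have hfluct : ∀ᵐ x ∂P, ∀ ε > 0, ∀ k, ∀ᶠ R : ℕ in atTop,
      ((sigCount X k R x : ℝ) - R * πθ k) ^ 2 ≤ ε * (R * log R) := by
    filter_upwards [ae_all_iff.mpr fun k => ae_forall_eventually_sq_card_filter_sub_le hX_meas
      hX_indep (hθ_pos k).le (hX_law · k)] with x hx ε hε k using hx k ε hε
  have hULR : ∀ x R, (((R + K - 1).factorial : ℕ) : ℝ) / ((((K - 1).factorial : ℕ) : ℝ) *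
      ∏ k, (((sigCount X k R x).factorial : ℕ) : ℝ)) * ∏ k, πstar k ^ sigCount X k R x =
      asymptoticULR πstar (fun k => sigCount X k R x) := fun x R => by
    simp only [asymptoticULR, sum_sigCount, Fintype.card_fin]
  simp only [hULR]
  refine ⟨fun h => ?_, fun hne => ?_⟩
  · subst h
    filter_upwards [hfluct] with x hx
    exact tendsto_asymptoticULR_atTop (by simpa using hK) hstar_pos hstar_sum
      (sum_sigCount X · x) hx
  · filter_upwards [hfluct] with x hx
    exact tendsto_asymptoticULR_nhds_zero hstar_pos hstar_sum (fun k => (hθ_pos k).le) hne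
      (sum_sigCount X · x) fun k => tendsto_div_of_eventually_sq_sub_le
        ((hx 1 one_pos k).mono fun R h => by rwa [one_mul] at h)

/-- The asymptotic uncertain likelihood ratio
`Λ̃(R) = [(R+K−1)!/((K−1)! ∏ₖ r^{(R)}ₖ!)] ∏ₖ (π*ₖ)^{r^{(R)}ₖ}`, where `r^{(R)}` are the
category counts of `R` i.i.d. training samples drawn from `π_θ`:
as `R → ∞` it diverges to `+∞` a.s. if `π_θ = π*`, and tends to `0` a.s. if `π_θ ≠ π*`. -/
theorem asymptoticULR_dichotomy
    {Ω : Type*} [MeasurableSpace Ω] (P : Measure Ω) [IsProbabilityMeasure P]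
    (K : ℕ) (hK : 2 ≤ K)
    (πstar πθ : Fin K → ℝ)
    (hstar_pos : ∀ k, 0 < πstar k) (hstar_sum : ∑ k, πstar k = 1)
    (hθ_pos : ∀ k, 0 < πθ k) (hθ_sum : ∑ k, πθ k = 1)
    (X : ℕ → Ω → Fin K) (hX_meas : ∀ n, Measurable (X n))
    (hX_indep : iIndepFun X P)
    (hX_law : ∀ n k, P {x | X n x = k} = ENNReal.ofReal (πθ k)) :
    (πθ = πstar →
      ∀ᵐ x ∂P, Tendsto
        (fun R =>
          (((R + K - 1).factorial : ℕ) : ℝ) /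
              ((((K - 1).factorial : ℕ) : ℝ) *
                ∏ k, (((sigCount X k R x).factorial : ℕ) : ℝ)) *
            ∏ k, πstar k ^ sigCount X k R x)
        atTop atTop) ∧
    (πθ ≠ πstar →
      ∀ᵐ x ∂P, Tendsto
        (fun R =>
          (((R + K - 1).factorial : ℕ) : ℝ) /
              ((((K - 1).factorial : ℕ) : ℝ) *
                ∏ k, (((sigCount X k R x).factorial : ℕ) : ℝ)) *
            ∏ k, πstar k ^ sigCount X k R x)
        atTop (nhds 0)) :=
  asymptoticULR_dichotomy_general P K hK πstar πθ hstar_pos hstar_sum hθ_pos X hX_meas hX_indep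
    hX_law
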